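/- For any probability distributions μ and ν on ℝ^d with finite second moments and any z ∈ ℝ^d, the covariance matrices satisfy ‖Cov(μ) − Cov(ν)‖ ≤ 2(sqrt(∫|x−z|² dμ) + sqrt(∫|y−z|² dν)) · W₂(μ, ν). -/

import Mathlib

open MeasureTheory Real

/-- The operator (spectral) norm of a square matrix. -/
noncomputable def opNorm {k : ℕ} (A : Matrix (Fin k) (Fin k) ℝ) : ℝ :=
  ‖LinearMap.toContinuousLinearMap (Matrix.toEuclideanLin A)‖

/-- The 2-Wasserstein distance between two probability measures on `ℝ^d`,
defined as the infimum of quadratic transport costs over couplings. -/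
noncomputable def W2 {d : ℕ} (μ ν : Measure (EuclideanSpace ℝ (Fin d))) : ℝ :=
  sInf {r : ℝ | ∃ γ : Measure (EuclideanSpace ℝ (Fin d) × EuclideanSpace ℝ (Fin d)),
    IsProbabilityMeasure γ ∧ γ.map Prod.fst = μ ∧ γ.map Prod.snd = ν ∧
    r = Real.sqrt (∫ p, ‖p.1 - p.2‖ ^ 2 ∂γ)}

/-- The covariance matrix of a probability distribution on `ℝ^d`. -/
noncomputable def covMatrix {d : ℕ} (μ : Measure (EuclideanSpace ℝ (Fin d))) :
    Matrix (Fin d) (Fin d) ℝ :=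
  fun i j => (∫ x, x i * x j ∂μ) - (∫ x, x i ∂μ) * (∫ x, x j ∂μ)

/-!
Along a coupling `γ` of `μ` and `ν`, with `X, Y` the two coordinates, the bilinear form of
`Cov μ - Cov ν` at `(v, u)` is `cov[⟪v, X⟫, ⟪u, X⟫] - cov[⟪v, Y⟫, ⟪u, Y⟫]`, which splits as
`cov[⟪v, X - Y⟫, ⟪u, X⟫] + cov[⟪v, Y⟫, ⟪u, X - Y⟫]`. A covariance is bounded by the product of
the standard deviations, and a standard deviation by the root mean square distance to any
point: `0` for `X - Y`, and `z` for `X` and `Y`. Taking the infimum over couplings gives `W₂`.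
-/

open ProbabilityTheory
open scoped RealInnerProductSpace

section RealValued

variable {Ω : Type*} {mΩ : MeasurableSpace Ω} {μ : Measure Ω} {X Y : Ω → ℝ}

theorem abs_integral_mul_le_sqrt_mul_sqrt (hX : MemLp X 2 μ) (hY : MemLp Y 2 μ) :
    |∫ ω, X ω * Y ω ∂μ| ≤ √(∫ ω, X ω ^ 2 ∂μ) * √(∫ ω, Y ω ^ 2 ∂μ) := by
  have holder := integral_mul_le_Lp_mul_Lq_of_nonneg (μ := μ) Real.HolderConjugate.two_two
    (f := fun ω ↦ |X ω|) (g := fun ω ↦ |Y ω|) (.of_forall fun _ ↦ abs_nonneg _)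
    (.of_forall fun _ ↦ abs_nonneg _)
    (by rw [ENNReal.ofReal_ofNat]; exact hX.abs) (by rw [ENNReal.ofReal_ofNat]; exact hY.abs)
  simp only [← Real.sqrt_eq_rpow, Real.rpow_two, sq_abs, ← abs_mul] at holder
  exact abs_integral_le_integral_abs.trans holder

theorem variance_le_integral_sub_sq [IsProbabilityMeasure μ] (hX : AEStronglyMeasurable X μ)
    (c : ℝ) : Var[X; μ] ≤ ∫ ω, (X ω - c) ^ 2 ∂μ := by
  rw [← variance_sub_const hX c]
  exact variance_le_expectation_sq (hX.sub aestronglyMeasurable_const)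

theorem abs_covariance_le_sqrt_mul_sqrt [IsProbabilityMeasure μ] (hX : MemLp X 2 μ)
    (hY : MemLp Y 2 μ) (a b : ℝ) :
    |cov[X, Y; μ]| ≤ √(∫ ω, (X ω - a) ^ 2 ∂μ) * √(∫ ω, (Y ω - b) ^ 2 ∂μ) := by
  calc |cov[X, Y; μ]|
      ≤ √(∫ ω, (X ω - μ[X]) ^ 2 ∂μ) * √(∫ ω, (Y ω - μ[Y]) ^ 2 ∂μ) :=
        abs_integral_mul_le_sqrt_mul_sqrt (hX.sub (memLp_const _)) (hY.sub (memLp_const _))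
    _ = √Var[X; μ] * √Var[Y; μ] := by
        rw [variance_eq_integral hX.aemeasurable, variance_eq_integral hY.aemeasurable]
    _ ≤ √(∫ ω, (X ω - a) ^ 2 ∂μ) * √(∫ ω, (Y ω - b) ^ 2 ∂μ) := by
        gcongr
        · exact variance_le_integral_sub_sq hX.1 a
        · exact variance_le_integral_sub_sq hY.1 b

end RealValued

section InnerProductSpaceValued

variable {Ω E : Type*} {mΩ : MeasurableSpace Ω} {μ : Measure Ω}
  [NormedAddCommGroup E] [InnerProductSpace ℝ E]

theorem sqrt_integral_inner_sq_le (w : E) {f : Ω → E} (hf : MemLp f 2 μ) :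
    √(∫ ω, ⟪w, f ω⟫ ^ 2 ∂μ) ≤ ‖w‖ * √(∫ ω, ‖f ω‖ ^ 2 ∂μ) := by
  have pointwise (ω : Ω) : ⟪w, f ω⟫ ^ 2 ≤ ‖w‖ ^ 2 * ‖f ω‖ ^ 2 := by
    rw [← mul_pow]
    exact sq_le_sq' (neg_le_of_abs_le (abs_real_inner_le_norm _ _)) (real_inner_le_norm _ _)
  have hint : ∫ ω, ⟪w, f ω⟫ ^ 2 ∂μ ≤ ‖w‖ ^ 2 * ∫ ω, ‖f ω‖ ^ 2 ∂μ := by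
    rw [← integral_const_mul]
    exact integral_mono (hf.const_inner w).integrable_sq
      (((memLp_two_iff_integrable_sq_norm hf.1).1 hf).const_mul _) pointwise
  calc √(∫ ω, ⟪w, f ω⟫ ^ 2 ∂μ) ≤ √(‖w‖ ^ 2 * ∫ ω, ‖f ω‖ ^ 2 ∂μ) := Real.sqrt_le_sqrt hint
    _ = ‖w‖ * √(∫ ω, ‖f ω‖ ^ 2 ∂μ) := by
        rw [Real.sqrt_mul (sq_nonneg _), Real.sqrt_sq (norm_nonneg _)]

variable [IsProbabilityMeasure μ] {X Y : Ω → E}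

theorem abs_covariance_inner_le (hX : MemLp X 2 μ) (hY : MemLp Y 2 μ) (u v a b : E) :
    |cov[fun ω ↦ ⟪u, X ω⟫, fun ω ↦ ⟪v, Y ω⟫; μ]|
      ≤ ‖u‖ * ‖v‖ * (√(∫ ω, ‖X ω - a‖ ^ 2 ∂μ) * √(∫ ω, ‖Y ω - b‖ ^ 2 ∂μ)) := by
  calc |cov[fun ω ↦ ⟪u, X ω⟫, fun ω ↦ ⟪v, Y ω⟫; μ]|
      ≤ √(∫ ω, ⟪u, X ω - a⟫ ^ 2 ∂μ) * √(∫ ω, ⟪v, Y ω - b⟫ ^ 2 ∂μ) := by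
        simpa only [inner_sub_right] using
          abs_covariance_le_sqrt_mul_sqrt (hX.const_inner u) (hY.const_inner v) ⟪u, a⟫ ⟪v, b⟫
    _ ≤ ‖u‖ * √(∫ ω, ‖X ω - a‖ ^ 2 ∂μ) * (‖v‖ * √(∫ ω, ‖Y ω - b‖ ^ 2 ∂μ)) := by
        gcongr
        · exact sqrt_integral_inner_sq_le u (hX.sub (memLp_const a))
        · exact sqrt_integral_inner_sq_le v (hY.sub (memLp_const b))
    _ = _ := by ring

theorem abs_covariance_inner_sub_covariance_inner_le (hX : MemLp X 2 μ) (hY : MemLp Y 2 μ)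
    (z u v : E) :
    |cov[fun ω ↦ ⟪u, X ω⟫, fun ω ↦ ⟪v, X ω⟫; μ]
        - cov[fun ω ↦ ⟪u, Y ω⟫, fun ω ↦ ⟪v, Y ω⟫; μ]|
      ≤ ‖u‖ * ‖v‖ * ((√(∫ ω, ‖X ω - z‖ ^ 2 ∂μ) + √(∫ ω, ‖Y ω - z‖ ^ 2 ∂μ))
          * √(∫ ω, ‖X ω - Y ω‖ ^ 2 ∂μ)) := by
  have split : cov[fun ω ↦ ⟪u, X ω⟫, fun ω ↦ ⟪v, X ω⟫; μ]
        - cov[fun ω ↦ ⟪u, Y ω⟫, fun ω ↦ ⟪v, Y ω⟫; μ]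
      = cov[fun ω ↦ ⟪u, X ω - Y ω⟫, fun ω ↦ ⟪v, X ω⟫; μ]
        + cov[fun ω ↦ ⟪u, Y ω⟫, fun ω ↦ ⟪v, X ω - Y ω⟫; μ] := by
    simp only [inner_sub_right]
    rw [covariance_fun_sub_left (hX.const_inner u) (hY.const_inner u) (hX.const_inner v),
      covariance_fun_sub_right (hY.const_inner u) (hX.const_inner v) (hY.const_inner v)]
    ring
  have h₁ := abs_covariance_inner_le (hX.sub hY) hX u v 0 z
  have h₂ := abs_covariance_inner_le hY (hX.sub hY) u v z 0
  simp only [Pi.sub_apply, sub_zero] at h₁ h₂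
  rw [split]
  refine (abs_add_le _ _).trans ((add_le_add h₁ h₂).trans_eq ?_)
  ring

end InnerProductSpaceValued

section Matrix

variable {d : ℕ} {μ : Measure (EuclideanSpace ℝ (Fin d))} [IsProbabilityMeasure μ]

theorem covMatrix_apply_eq_covariance (hμ : MemLp id 2 μ) (i j : Fin d) :
    covMatrix μ i j = cov[fun x ↦ x i, fun x ↦ x j; μ] := by
  have hi : MemLp (fun x : EuclideanSpace ℝ (Fin d) ↦ x i) 2 μ := hμ.eval_piLp i
  have hj : MemLp (fun x : EuclideanSpace ℝ (Fin d) ↦ x j) 2 μ := hμ.eval_piLp j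
  rw [covariance_eq_sub hi hj]
  rfl

theorem inner_toEuclideanLin_covMatrix (hμ : MemLp id 2 μ) (u v : EuclideanSpace ℝ (Fin d)) :
    ⟪Matrix.toEuclideanLin (covMatrix μ) u, v⟫ = cov[fun x ↦ ⟪v, x⟫, fun x ↦ ⟪u, x⟫; μ] := by
  have hcoord (i : Fin d) : MemLp (fun x : EuclideanSpace ℝ (Fin d) ↦ x i) 2 μ :=
    hμ.eval_piLp i
  simp only [PiLp.inner_apply, RCLike.inner_apply, conj_trivial]
  rw [covariance_fun_sum_fun_sum (fun i ↦ (hcoord i).mul_const _)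
    (fun j ↦ (hcoord j).mul_const _)]
  simp only [covariance_mul_const_left, covariance_mul_const_right,
    ← covMatrix_apply_eq_covariance hμ, Matrix.toEuclideanLin, Matrix.ofLp_toLpLin,
    Matrix.toLin'_apply, Matrix.mulVec, dotProduct, Finset.mul_sum]
  exact Finset.sum_congr rfl fun i _ ↦ Finset.sum_congr rfl fun j _ ↦ by ring

end Matrix

theorem opNorm_le_of_inner_le {k : ℕ} (A : Matrix (Fin k) (Fin k) ℝ) {C : ℝ} (hC : 0 ≤ C)
    (h : ∀ u v : EuclideanSpace ℝ (Fin k), ‖u‖ = 1 → ‖v‖ = 1 →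
      ⟪Matrix.toEuclideanLin A u, v⟫ ≤ C) :
    opNorm A ≤ C :=
  ContinuousLinearMap.opNorm_le_of_re_inner_le hC h

section Coupling

variable {d : ℕ} {μ ν : Measure (EuclideanSpace ℝ (Fin d))}
  [IsProbabilityMeasure μ] [IsProbabilityMeasure ν]

theorem le_mul_W2_of_forall_coupling {a K : ℝ} (hK : 0 ≤ K)
    (h : ∀ γ : Measure (EuclideanSpace ℝ (Fin d) × EuclideanSpace ℝ (Fin d)),
      IsProbabilityMeasure γ → γ.map Prod.fst = μ → γ.map Prod.snd = ν →
        a ≤ K * √(∫ p, ‖p.1 - p.2‖ ^ 2 ∂γ)) :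
    a ≤ K * W2 μ ν := by
  rw [W2, ← smul_eq_mul, ← Real.sInf_smul_of_nonneg hK]
  refine le_csInf ⟨_, ⟨_, ⟨μ.prod ν, inferInstance, by simp, by simp, rfl⟩, rfl⟩⟩ ?_
  rintro _ ⟨_, ⟨γ, hγ, h₁, h₂, rfl⟩, rfl⟩
  exact h γ hγ h₁ h₂

theorem opNorm_covMatrix_sub_le_of_coupling (hμ : MemLp id 2 μ) (hν : MemLp id 2 ν)
    (z : EuclideanSpace ℝ (Fin d))
    {γ : Measure (EuclideanSpace ℝ (Fin d) × EuclideanSpace ℝ (Fin d))} [IsProbabilityMeasure γ]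
    (h₁ : γ.map Prod.fst = μ) (h₂ : γ.map Prod.snd = ν) :
    opNorm (covMatrix μ - covMatrix ν)
      ≤ (√(∫ x, ‖x - z‖ ^ 2 ∂μ) + √(∫ y, ‖y - z‖ ^ 2 ∂ν))
        * √(∫ p, ‖p.1 - p.2‖ ^ 2 ∂γ) := by
  subst h₁ h₂
  have hfst : MemLp Prod.fst 2 γ := (memLp_map_measure_iff hμ.1 (by fun_prop)).1 hμ
  have hsnd : MemLp Prod.snd 2 γ := (memLp_map_measure_iff hν.1 (by fun_prop)).1 hν
  refine opNorm_le_of_inner_le _ (by positivity) fun u v hu hv ↦ ?_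
  rw [map_sub, LinearMap.sub_apply, inner_sub_left, inner_toEuclideanLin_covMatrix hμ,
    inner_toEuclideanLin_covMatrix hν, covariance_map_fun, covariance_map_fun,
    integral_map, integral_map]
  · simpa [hu, hv] using
      (le_abs_self _).trans (abs_covariance_inner_sub_covariance_inner_le hfst hsnd z v u)
  all_goals fun_prop

end Coupling

theorem stmt_12 (d : ℕ) (μ ν : Measure (EuclideanSpace ℝ (Fin d)))
    [IsProbabilityMeasure μ] [IsProbabilityMeasure ν]
    (hμ2 : Integrable (fun x => ‖x‖ ^ 2) μ) (hν2 : Integrable (fun y => ‖y‖ ^ 2) ν)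
    (z : EuclideanSpace ℝ (Fin d)) :
    opNorm (covMatrix μ - covMatrix ν)
      ≤ 2 * (Real.sqrt (∫ x, ‖x - z‖ ^ 2 ∂μ) + Real.sqrt (∫ y, ‖y - z‖ ^ 2 ∂ν))
          * W2 μ ν := by
  have hμ : MemLp id 2 μ := (memLp_two_iff_integrable_sq_norm aestronglyMeasurable_id).2 hμ2
  have hν : MemLp id 2 ν := (memLp_two_iff_integrable_sq_norm aestronglyMeasurable_id).2 hν2
  refine le_mul_W2_of_forall_coupling (by positivity) fun γ _ h₁ h₂ ↦ ?_
  refine (opNorm_covMatrix_sub_le_of_coupling hμ hν z h₁ h₂).trans ?_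
  rw [mul_assoc]
  exact le_mul_of_one_le_left (by positivity) one_le_two
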